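/- If Λ ⊂ 𝔻 is a determination set for the Nevanlinna class 𝒩, then Λ is a determination set for H^∞: sup_{λ∈Λ}|f(λ)| = sup_{z∈𝔻}|f(z)| for every bounded holomorphic function f on 𝔻. -/

import Mathlib

open Complex Metric Set MeasureTheory Filter Topology

noncomputable section

/-- The open unit disk in the complex plane. -/
def unitDisk : Set ℂ := Metric.ball 0 1

/-- `log⁺ x = log (max 1 x)`. -/
def logPlus (x : ℝ) : ℝ := Real.log (max 1 x)

/-- `h` is a positive harmonic function on `S`: on a simply connected domain,
harmonic functions are exactly the real parts of holomorphic functions. -/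
def PosHarmOn (S : Set ℂ) (h : ℂ → ℝ) : Prop :=
  (∃ g : ℂ → ℂ, DifferentiableOn ℂ g S ∧ ∀ z ∈ S, h z = (g z).re) ∧
  ∀ z ∈ S, 0 < h z

/-- The Nevanlinna class: holomorphic functions on the unit disk with uniformly
bounded integral means of `log⁺|f|`. -/
def NevClass (f : ℂ → ℂ) : Prop :=
  DifferentiableOn ℂ f unitDisk ∧
  ∃ M : ℝ, ∀ r ∈ Set.Ioo (0:ℝ) 1,
    (1/(2*Real.pi)) * ∫ θ in (0:ℝ)..(2*Real.pi),
      logPlus (‖f ((r:ℂ) * Complex.exp ((θ:ℂ) * Complex.I))‖) ≤ M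

/-- `N(f|Λ)`: infimum of `h(0)` over positive harmonic majorants of `log(1+|f|)` on `Λ`. -/
def NRestrict (f : ℂ → ℂ) (Λ : Set ℂ) : ℝ :=
  sInf {c | ∃ h : ℂ → ℝ, PosHarmOn unitDisk h ∧
    (∀ z ∈ Λ, Real.log (1 + ‖f z‖) ≤ h z) ∧ c = h 0}

/-- `N(f)`. -/
def NFull (f : ℂ → ℂ) : ℝ := NRestrict f unitDisk

/-- `N₊(f|Λ)`. -/
def NplusRestrict (f : ℂ → ℂ) (Λ : Set ℂ) : ℝ :=
  sInf {c | ∃ h : ℂ → ℝ, PosHarmOn unitDisk h ∧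
    (∀ z ∈ Λ, logPlus (‖f z‖) ≤ h z) ∧ c = h 0}

/-- `N₊(f)`. -/
def NplusFull (f : ℂ → ℂ) : ℝ := NplusRestrict f unitDisk

/-- `Λ` is a sampling set for the Nevanlinna class. -/
def SamplingNev (Λ : Set ℂ) : Prop :=
  ∃ C : ℝ, 0 < C ∧ ∀ f : ℂ → ℂ, NevClass f → NFull f ≤ NRestrict f Λ + C

/-- `Λ` is a determination set for the Nevanlinna class. -/
def DeterminationNev (Λ : Set ℂ) : Prop :=
  ∀ f : ℂ → ℂ, NevClass f → (∃ M : ℝ, ∀ z ∈ Λ, ‖f z‖ ≤ M) →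
    ∃ M : ℝ, ∀ z ∈ unitDisk, ‖f z‖ ≤ M

/-- `Λ` is a strongly sampling set for the Nevanlinna class. -/
def StrongSamplingNev (Λ : Set ℂ) : Prop :=
  ∀ f : ℂ → ℂ, ∀ h : ℂ → ℝ, NevClass f → PosHarmOn unitDisk h →
    (∀ z ∈ Λ, logPlus (‖f z‖) ≤ h z) →
    ∀ z ∈ unitDisk, logPlus (‖f z‖) ≤ h z

/-- Pseudohyperbolic distance. -/
def pdist (z w : ℂ) : ℝ :=
  ‖z - w‖ / ‖1 - (starRingEnd ℂ z) * w‖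

/-- Pseudohyperbolic disk. -/
def pBall (z : ℂ) (r : ℝ) : Set ℂ := {w ∈ unitDisk | pdist z w < r}

/-- Pseudohyperbolic dilation `E^δ`. -/
def pDilate (E : Set ℂ) (δ : ℝ) : Set ℂ := ⋃ z ∈ E, pBall z δ

/-- Hayman–Lyons set. -/
def HaymanLyons (E : Set ℂ) : Prop :=
  ∃ δ ∈ Set.Ioo (0:ℝ) 1, ∀ ζ : ℂ, ‖ζ‖ = 1 →
    ∫⁻ z in pDilate E δ, ENNReal.ofReal (1 / ‖ζ - z‖ ^ 2) = ⊤

/-- Dyadic (Whitney) squares `Q_{n,k}`. -/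
def dSquare (n k : ℕ) : Set ℂ :=
  {z | ∃ r θ : ℝ, 1 - (2:ℝ)^(-(n:ℤ)) ≤ r ∧ r < 1 - (2:ℝ)^(-(n:ℤ)-1) ∧
    2*Real.pi*k * (2:ℝ)^(-(n:ℤ)) ≤ θ ∧ θ < 2*Real.pi*(k+1) * (2:ℝ)^(-(n:ℤ)) ∧
    z = (r:ℂ) * Complex.exp ((θ:ℂ) * Complex.I)}

/-- Center of the dyadic square `Q_{n,k}`. -/
def dCenter (n k : ℕ) : ℂ :=
  ((1 - (3/4) * (2:ℝ)^(-(n:ℤ)) : ℝ) : ℂ) *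
    Complex.exp (((2*Real.pi*(k + 1/2) * (2:ℝ)^(-(n:ℤ)) : ℝ) : ℂ) * Complex.I)

/-- `Q̃_{n,k}`: union of the dyadic squares whose closure meets the closure of `Q_{n,k}`. -/
def dTilde (n k : ℕ) : Set ℂ :=
  ⋃ (m : ℕ) (j : ℕ) (_ : j < 2^m)
    (_ : (closure (dSquare m j) ∩ closure (dSquare n k)).Nonempty), dSquare m j

/-- The vulnerability `w_{n,k}(Λ,N)`. -/
def vul (δ : ℝ) (Λ : Set ℂ) (n k N : ℕ) : ℝ :=
  sSup {t | ∃ a : Fin N → ℂ, (∀ j, a j ∈ pDilate (closure (dSquare n k)) δ) ∧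
    t = sInf {s | ∃ lam ∈ Λ ∩ closure (dSquare n k),
      s = ∑ j, Real.log (1 / pdist lam (a j))}}

/-- Poisson kernel `P_z(e^{iθ})`. -/
def poissonKer (z : ℂ) (θ : ℝ) : ℝ :=
  (1 - ‖z‖ ^ 2) / ‖Complex.exp ((θ:ℂ) * Complex.I) - z‖ ^ 2

/-- Poisson integral of a boundary function (in the angle variable). -/
def poissonIntegral (w : ℝ → ℝ) (z : ℂ) : ℝ :=
  (1/(2*Real.pi)) * ∫ θ in (0:ℝ)..(2*Real.pi), poissonKer z θ * w θ

/-- Blaschke factor with zero at `a`. -/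
def blaschkeFactor (a z : ℂ) : ℂ :=
  if a = 0 then z
  else ((starRingEnd ℂ a) / (‖a‖ : ℂ)) * ((a - z) / (1 - (starRingEnd ℂ a) * z))

/-- Blaschke product with zero sequence `Z` (with multiplicities given by repetitions). -/
def blaschkeProd {ι : Type} (Z : ι → ℂ) (z : ℂ) : ℂ := ∏' i, blaschkeFactor (Z i) z

/-- `Z` is a Blaschke sequence in the unit disk. -/
def BlaschkeSeq {ι : Type} (Z : ι → ℂ) : Prop :=
  (∀ i, Z i ∈ unitDisk) ∧ Summable fun i => 1 - ‖Z i‖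

/-- Stolz angle at `ζ` with aperture `κ`. -/
def stolz (κ : ℝ) (ζ : ℂ) : Set ℂ :=
  {z ∈ unitDisk | ‖z - ζ‖ ≤ κ * (1 - ‖z‖)}

/-- `NT(Λ)`: points of the circle that are nontangential limits of points of `Λ`. -/
def NTSet (Λ : Set ℂ) : Set ℂ :=
  {ζ | ∃ κ : ℝ, 1 < κ ∧ ∃ u : ℕ → ℂ,
    (∀ n, u n ∈ Λ ∧ u n ∈ stolz κ ζ) ∧ Tendsto u atTop (𝓝 ζ)}

/-- `f` has nontangential limit `L` at `ζ`. -/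
def NTTendsto (f : ℂ → ℂ) (ζ L : ℂ) : Prop :=
  ∀ κ : ℝ, 1 < κ → Tendsto f (𝓝[stolz κ ζ] ζ) (𝓝 L)

/-- The Smirnov class. -/
def SmirnovClass (f : ℂ → ℂ) : Prop :=
  NevClass f ∧ ∃ fstar : ℝ → ℂ,
    (∀ᵐ (θ : ℝ) ∂(volume.restrict (Set.Ioc (0:ℝ) (2*Real.pi))),
        NTTendsto f (Complex.exp ((θ:ℂ) * Complex.I)) (fstar θ)) ∧
    Tendsto
      (fun r : ℝ => ∫ θ in (0:ℝ)..(2*Real.pi),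
        logPlus (‖f ((r:ℂ) * Complex.exp ((θ:ℂ) * Complex.I))‖))
      (𝓝[<] (1:ℝ))
      (𝓝 (∫ θ in (0:ℝ)..(2*Real.pi), logPlus (‖fstar θ‖)))

/-- `Λ` is a sampling set for the Smirnov class. -/
def SamplingSmirnov (Λ : Set ℂ) : Prop :=
  ∃ C : ℝ, 0 < C ∧ ∀ f : ℂ → ℂ, SmirnovClass f → NFull f ≤ NRestrict f Λ + C

/-- `Λ` is a determination set for the Smirnov class. -/
def DeterminationSmirnov (Λ : Set ℂ) : Prop :=
  ∀ f : ℂ → ℂ, SmirnovClass f → (∃ M : ℝ, ∀ z ∈ Λ, ‖f z‖ ≤ M) →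
    ∃ M : ℝ, ∀ z ∈ unitDisk, ‖f z‖ ≤ M

/-- `Λ` is a strongly sampling set for the Smirnov class. -/
def StrongSamplingSmirnov (Λ : Set ℂ) : Prop :=
  ∀ f : ℂ → ℂ, ∀ h : ℂ → ℝ, SmirnovClass f → PosHarmOn unitDisk h →
    (∀ z ∈ Λ, logPlus (‖f z‖) ≤ h z) →
    ∀ z ∈ unitDisk, logPlus (‖f z‖) ≤ h z

/-- The class `ℱ`. -/
def PsiF (ψ : ℝ → ℝ) : Prop :=
  MonotoneOn ψ (Set.Ico 0 1) ∧ ContinuousOn ψ (Set.Ico 0 1) ∧ ψ 0 = 0 ∧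
  (∀ x ∈ Set.Ico (0:ℝ) 1, 0 ≤ ψ x) ∧
  ∫⁻ x in Set.Ioc (0:ℝ) (1/2), ENNReal.ofReal (ψ x / x ^ 2) ≠ ⊤

/-- Approach region `Γ_ψ(ζ)`. -/
def gammaReg (ψ : ℝ → ℝ) (ζ : ℂ) : Set ℂ :=
  {z ∈ unitDisk | ‖z - ζ‖ < 1 ∧ ψ (‖z - ζ‖) ≤ 1 - ‖z‖}

/-- Condition (b): `∑_{λ∈Λ∩Γ_ψ(ζ)} (1-|λ|) = ∞` for all `ψ ∈ ℱ`, `ζ ∈ 𝕋`. -/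
def BlaschkeSumDiverges (Λ : Set ℂ) : Prop :=
  ∀ ψ : ℝ → ℝ, PsiF ψ → ∀ ζ : ℂ, ‖ζ‖ = 1 →
    ∑' lam : ↥(Λ ∩ gammaReg ψ ζ), ENNReal.ofReal (1 - ‖(lam : ℂ)‖) = ⊤

/-- `g : (0,1] → (0,1]` nondecreasing, continuous, with `g(0⁺)=0`. -/
def GNetFn (g : ℝ → ℝ) : Prop :=
  MonotoneOn g (Set.Ioc 0 1) ∧ ContinuousOn g (Set.Ioc 0 1) ∧
  (∀ t ∈ Set.Ioc (0:ℝ) 1, g t ∈ Set.Ioc (0:ℝ) 1) ∧ Tendsto g (𝓝[>] (0:ℝ)) (𝓝 0)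

/-- `Λ` is a `g`-net. -/
def IsGNet (g : ℝ → ℝ) (Λ : Set ℂ) : Prop :=
  Λ ⊆ unitDisk ∧
  (Λ.Pairwise fun x y =>
    Disjoint (pBall x (g (1 - ‖x‖))) (pBall y (g (1 - ‖y‖)))) ∧
  ∃ C : ℝ, 0 < C ∧ unitDisk = ⋃ lam ∈ Λ, pBall lam (C * g (1 - ‖lam‖))

/-- Uniformly dense sequence (as a set). -/
def UniformlyDense (Λ : Set ℂ) : Prop :=
  Λ ⊆ unitDisk ∧ (∃ s : ℝ, 0 < s ∧ ∀ x ∈ Λ, ∀ y ∈ Λ, x ≠ y → s ≤ pdist x y) ∧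
  ∃ rr : ℝ, rr < 1 ∧ unitDisk = ⋃ lam ∈ Λ, pBall lam rr

/-- `Λ(φ) = ∪_λ D(λ, φ(1-|λ|))`. -/
def unionDisks (Λ : Set ℂ) (φ : ℝ → ℝ) : Set ℂ :=
  ⋃ lam ∈ Λ, pBall lam (φ (1 - ‖lam‖))

/-- The class `𝒮𝒩` of subharmonic functions with bounded means of `u⁺`. -/
def SNClass (u : ℂ → ℝ) : Prop :=
  UpperSemicontinuousOn u unitDisk ∧
  (∀ z ∈ unitDisk, ∀ ρ : ℝ, 0 < ρ → Metric.closedBall z ρ ⊆ unitDisk →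
    u z ≤ (1/(2*Real.pi)) * ∫ θ in (0:ℝ)..(2*Real.pi),
      u (z + (ρ:ℂ) * Complex.exp ((θ:ℂ) * Complex.I))) ∧
  ∃ M : ℝ, ∀ r ∈ Set.Ioo (0:ℝ) 1,
    ∫ θ in (0:ℝ)..(2*Real.pi), max (u ((r:ℂ) * Complex.exp ((θ:ℂ) * Complex.I))) 0 ≤ M

/-- Upper half-plane. -/
def upperHalf : Set ℂ := {z | 0 < z.im}

/-- Cayley transform from the upper half-plane to the unit disk. -/
def cayley (z : ℂ) : ℂ := (z - Complex.I) / (z + Complex.I)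

/-- The discretized rings associated to `{r_n}` and `{ε_n}`. -/
def discRings (r ε : ℕ → ℝ) : Set ℂ :=
  {z | ∃ n j : ℕ, j < Nat.floor (1/((1 - r n) * ε n)) ∧
    z = ((r n : ℝ) : ℂ) * Complex.exp (((2*Real.pi*j*(1 - r n)*ε n : ℝ) : ℂ) * Complex.I)}

/-- A Blaschke distribution. -/
def BlaschkeDistribution (N : ℕ → ℕ → ℕ) : Prop :=
  Summable fun n : ℕ => (2:ℝ)^(-(n:ℤ)) * ∑ k ∈ Finset.range (2^n), (N n k : ℝ)
lemma continuous_logPlus : Continuous logPlus := by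
  rw [continuous_iff_continuousAt]
  intro x
  have h1 : ContinuousAt Real.log (max 1 x) :=
    Real.continuousAt_log (by positivity)
  exact h1.comp ((continuous_const.max continuous_id).continuousAt)

lemma logPlus_inv_le {x B : ℝ} (hx : 0 < x) (hxB : x ≤ B) (hB : 1 ≤ B) :
    logPlus x⁻¹ ≤ Real.log B - Real.log x := by
  unfold logPlus
  rcases le_total 1 x with h | h
  · have : x⁻¹ ≤ 1 := inv_le_one_of_one_le₀ h
    rw [max_eq_left this, Real.log_one]
    have := Real.log_le_log hx hxB
    linarith
  · have h1 : 1 ≤ x⁻¹ := (one_le_inv₀ hx).2 h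
    rw [max_eq_right h1, Real.log_inv]
    have := Real.log_nonneg hB
    linarith

/-- Mean value property for holomorphic functions on the unit disk. -/
lemma meanValue {v : ℂ → ℂ} (hv : DifferentiableOn ℂ v unitDisk) {r : ℝ}
    (hr : r ∈ Set.Ioo (0:ℝ) 1) :
    ∫ θ in (0:ℝ)..(2*Real.pi), v (circleMap 0 r θ) = (2*Real.pi) • v 0 := by
  have hsub : closedBall (0:ℂ) r ⊆ unitDisk := closedBall_subset_ball hr.2
  have hd : DiffContOnCl ℂ v (ball 0 r) := by
    apply DifferentiableOn.diffContOnCl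
    rw [closure_ball (0:ℂ) (ne_of_gt hr.1)]
    exact hv.mono hsub
  have h0 : (0:ℂ) ∈ ball (0:ℂ) r := mem_ball_self hr.1
  have key := hd.circleIntegral_sub_inv_smul h0
  rw [circleIntegral] at key
  simp only [sub_zero, deriv_circleMap, smul_eq_mul] at key
  have heq : ∀ θ : ℝ, circleMap 0 r θ * I * ((circleMap 0 r θ)⁻¹ * v (circleMap 0 r θ))
      = I * v (circleMap 0 r θ) := by
    intro θ
    have h : circleMap 0 r θ ≠ 0 := by
      simp [circleMap_eq_center_iff, ne_of_gt hr.1]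
    field_simp
  simp only [heq] at key
  rw [intervalIntegral.integral_const_mul] at key
  have hI : (I:ℂ) ≠ 0 := I_ne_zero
  have h2 : (I:ℂ) * ((2*Real.pi : ℝ) • v 0) = 2 * Real.pi * I * v 0 := by
    simp [Complex.real_smul]; ring
  have := mul_left_cancel₀ hI (key.trans h2.symm)
  exact this

lemma nev_inv (f : ℂ → ℂ) (ζ : ℂ) (B : ℝ) (hf : DifferentiableOn ℂ f unitDisk)
    (hζ : ζ ≠ 0) (hpos : ∀ z ∈ unitDisk, 0 < ((ζ - f z) / ζ).re)
    (hB : ∀ z ∈ unitDisk, ‖ζ - f z‖ ≤ B) (hB1 : 1 ≤ B) :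
    NevClass (fun z => (ζ - f z)⁻¹) := by
  have hu : DifferentiableOn ℂ (fun z => ζ - f z) unitDisk :=
    (differentiableOn_const ζ).sub hf
  have hune : ∀ z ∈ unitDisk, ζ - f z ≠ 0 := by
    intro z hz h
    have := hpos z hz
    rw [h] at this
    simp at this
  have hv : DifferentiableOn ℂ (fun z => Complex.log ((ζ - f z) / ζ)) unitDisk := by
    apply DifferentiableOn.clog (hu.div_const ζ)
    intro z hz
    exact Complex.mem_slitPlane_iff.2 (Or.inl (hpos z hz))
  set v : ℂ → ℂ := fun z => Complex.log ((ζ - f z) / ζ) with hvdef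
  have hlog : ∀ z ∈ unitDisk, Real.log (‖ζ - f z‖)
      = (v z).re + Real.log (‖ζ‖) := by
    intro z hz
    have h1 : (v z).re = Real.log (‖(ζ - f z) / ζ‖) := Complex.log_re _
    rw [h1, norm_div, Real.log_div (by simpa [sub_eq_zero] using hune z hz) (by simpa using hζ)]
    ring
  have pw : ∀ z ∈ unitDisk, logPlus (‖(ζ - f z)⁻¹‖)
      ≤ Real.log B - Real.log (‖ζ‖) - (v z).re := by
    intro z hz
    rw [norm_inv]
    have hx : 0 < ‖ζ - f z‖ := by
      rw [norm_pos_iff]; exact hune z hz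
    have := logPlus_inv_le hx (hB z hz) hB1
    rw [hlog z hz] at this
    linarith
  refine ⟨hu.inv hune, Real.log B - Real.log (‖ζ‖) - (v 0).re, ?_⟩
  intro r hr
  have hmem : ∀ θ : ℝ, circleMap 0 r θ ∈ unitDisk := by
    intro θ
    have : ‖circleMap 0 r θ‖ = |r| := norm_circleMap_zero r θ
    simp only [unitDisk, mem_ball, Complex.dist_eq, sub_zero]
    rw [show ‖circleMap 0 r θ‖ = |r| from norm_circleMap_zero r θ,
      abs_of_pos hr.1]
    exact hr.2
  have hc1 : Continuous fun θ : ℝ => circleMap 0 r θ := continuous_circleMap 0 r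
  have hcontv : Continuous fun θ : ℝ => v (circleMap 0 r θ) :=
    hv.continuousOn.comp_continuous hc1 hmem
  have hcontvre : Continuous fun θ : ℝ => (v (circleMap 0 r θ)).re :=
    Complex.continuous_re.comp hcontv
  have hcontu : Continuous fun θ : ℝ => ζ - f (circleMap 0 r θ) :=
    hu.continuousOn.comp_continuous hc1 hmem
  have hcontl : Continuous fun θ : ℝ => logPlus (‖(ζ - f (circleMap 0 r θ))⁻¹‖) :=
    continuous_logPlus.comp (continuous_norm.comp (hcontu.inv₀
      (fun θ => hune _ (hmem θ))))
  have hmv : ∫ θ in (0:ℝ)..(2*Real.pi), (v (circleMap 0 r θ)).re = 2*Real.pi * (v 0).re := by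
    have h1 := meanValue hv hr
    have h2 := Complex.reCLM.intervalIntegral_comp_comm
      (hcontv.intervalIntegrable (μ := volume) (0:ℝ) (2*Real.pi))
    simp only [Complex.reCLM_apply] at h2
    rw [h2, h1]
    simp [Complex.real_smul]
  have hmono : ∫ θ in (0:ℝ)..(2*Real.pi), logPlus (‖(ζ - f (circleMap 0 r θ))⁻¹‖)
      ≤ ∫ θ in (0:ℝ)..(2*Real.pi),
        (Real.log B - Real.log (‖ζ‖) - (v (circleMap 0 r θ)).re) := by
    apply intervalIntegral.integral_mono_on (by positivity)
      (hcontl.intervalIntegrable _ _)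
      ((continuous_const.sub hcontvre).intervalIntegrable _ _)
    intro θ _
    exact pw _ (hmem θ)
  have hrhs : ∫ θ in (0:ℝ)..(2*Real.pi),
      (Real.log B - Real.log (‖ζ‖) - (v (circleMap 0 r θ)).re)
      = 2*Real.pi * (Real.log B - Real.log (‖ζ‖)) - 2*Real.pi * (v 0).re := by
    rw [intervalIntegral.integral_sub (intervalIntegrable_const)
      (hcontvre.intervalIntegrable _ _), hmv, intervalIntegral.integral_const]
    simp only [smul_eq_mul, sub_zero]
    all_goals ring
  have hpi : (0:ℝ) < 2*Real.pi := by positivity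
  have hfin : (1/(2*Real.pi)) * ∫ θ in (0:ℝ)..(2*Real.pi),
      logPlus (‖(ζ - f (circleMap 0 r θ))⁻¹‖)
      ≤ Real.log B - Real.log (‖ζ‖) - (v 0).re := by
    rw [div_mul_eq_mul_div, one_mul, div_le_iff₀ hpi]
    calc _ ≤ _ := hmono
    _ = _ := hrhs
    _ = (Real.log B - Real.log (‖ζ‖) - (v 0).re) * (2*Real.pi) := by ring
  have hcm : ∀ θ : ℝ, (r:ℂ) * Complex.exp ((θ:ℂ) * Complex.I) = circleMap 0 r θ := by
    intro θ; simp [circleMap]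
  simpa only [hcm] using hfin

/-- a determination set for the Nevanlinna class is a
determination set for `H^∞`. -/
theorem determination_nev_implies_determination_hinf (Λ : Set ℂ) (hΛ : Λ ⊆ unitDisk)
    (hdet : DeterminationNev Λ) (f : ℂ → ℂ) (hf : DifferentiableOn ℂ f unitDisk)
    (hb : ∃ M : ℝ, ∀ z ∈ unitDisk, ‖f z‖ ≤ M) :
    (⨆ z ∈ Λ, (‖f z‖ : EReal)) = ⨆ z ∈ unitDisk, (‖f z‖ : EReal) := by
  classical
  have h01 : (0:ℂ) ∈ unitDisk := by simp [unitDisk]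
  obtain ⟨Mb, hMb⟩ := hb
  -- Λ is nonempty
  have hΛne : Λ.Nonempty := by
    by_contra hne
    rw [Set.not_nonempty_iff_eq_empty] at hne
    have hnev : NevClass (fun z => ((1:ℂ) - z)⁻¹) := by
      refine nev_inv (fun z => z) 1 3 differentiableOn_id one_ne_zero ?_ ?_ (by norm_num)
      · intro z hz
        have hz1 : ‖z‖ < 1 := by
          simpa [unitDisk, Complex.dist_eq] using hz
        have : z.re < 1 := lt_of_le_of_lt (Complex.re_le_norm z) hz1
        simp only [div_one, Complex.sub_re, Complex.one_re]
        linarith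
      · intro z hz
        have hz1 : ‖z‖ < 1 := by
          simpa [unitDisk, Complex.dist_eq] using hz
        have h2 : ‖1 - z‖ ≤ ‖(1:ℂ)‖ + ‖z‖ := by
          simpa [] using norm_sub_le (1:ℂ) z
        simp only [norm_one] at h2
        linarith
    obtain ⟨M, hM⟩ := hdet _ hnev ⟨0, by simp [hne]⟩
    have hM1 : 1 ≤ M := by simpa using hM 0 h01
    set z : ℂ := ((1 - (M+1)⁻¹ : ℝ) : ℂ) with hzdef
    have hMpos : (0:ℝ) < M + 1 := by linarith
    have hinv : (M+1)⁻¹ ≤ 2⁻¹ := by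
      apply inv_anti₀ (by norm_num)
      linarith
    have hinvpos : (0:ℝ) < (M+1)⁻¹ := by positivity
    have hzd : z ∈ unitDisk := by
      simp only [unitDisk, mem_ball, Complex.dist_eq, sub_zero, hzdef, Complex.norm_real]
      rw [Real.norm_of_nonneg (by linarith)]
      linarith
    have h1z : (1:ℂ) - z = (((M+1)⁻¹ : ℝ) : ℂ) := by
      rw [hzdef]; push_cast; ring
    have := hM z hzd
    rw [h1z, norm_inv, Complex.norm_real, Real.norm_of_nonneg hinvpos.le, inv_inv] at this
    linarith
  obtain ⟨lam0, hlam0⟩ := hΛne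
  -- sup over Λ
  have hbddΛ : BddAbove ((fun z => ‖f z‖) '' Λ) := by
    refine ⟨Mb, ?_⟩
    rintro x ⟨lam, hlam, rfl⟩
    exact hMb _ (hΛ hlam)
  set sΛ := sSup ((fun z => ‖f z‖) '' Λ) with hsΛdef
  have hsΛub : ∀ lam ∈ Λ, ‖f lam‖ ≤ sΛ := fun lam hlam =>
    le_csSup hbddΛ ⟨lam, hlam, rfl⟩
  have hsΛ0 : 0 ≤ sΛ := le_trans (norm_nonneg _) (hsΛub lam0 hlam0)
  -- key claim
  have key : ∀ z ∈ unitDisk, ‖f z‖ ≤ sΛ := by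
    intro z₀ hz₀
    by_contra hgt
    push_neg at hgt
    have hEne : ((fun z => ‖f z‖) '' unitDisk).Nonempty := ⟨_, 0, h01, rfl⟩
    have hbddE : BddAbove ((fun z => ‖f z‖) '' unitDisk) := by
      refine ⟨Mb, ?_⟩
      rintro x ⟨z, hz, rfl⟩
      exact hMb _ hz
    set S := sSup ((fun z => ‖f z‖) '' unitDisk) with hSdef
    have hleS : ∀ z ∈ unitDisk, ‖f z‖ ≤ S := fun z hz =>
      le_csSup hbddE ⟨z, hz, rfl⟩
    have hz₀S : ‖f z₀‖ ≤ S := hleS z₀ hz₀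
    have hsΛS : sΛ < S := lt_of_lt_of_le hgt hz₀S
    have hS0 : 0 < S := lt_of_le_of_lt hsΛ0 hsΛS
    by_cases hstrict : ∀ z ∈ unitDisk, ‖f z‖ < S
    · -- strict maximum case: build the unbounded Nevanlinna function
      have hKsub : closure (f '' unitDisk) ⊆ closedBall 0 S := by
        apply closure_minimal ?_ Metric.isClosed_closedBall
        rintro w ⟨z, hz, rfl⟩
        simpa [Complex.dist_eq] using hleS z hz
      have hKc : IsCompact (closure (f '' unitDisk)) :=
        (isCompact_closedBall (0:ℂ) S).of_isClosed_subset isClosed_closure hKsub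
      have hKne : (closure (f '' unitDisk)).Nonempty := ⟨f 0, subset_closure ⟨0, h01, rfl⟩⟩
      obtain ⟨ζ, hζK, hζmax⟩ := hKc.exists_isMaxOn hKne (continuous_norm.continuousOn)
      have hζle : ‖ζ‖ ≤ S := by simpa [Complex.dist_eq] using hKsub hζK
      have hζge : S ≤ ‖ζ‖ := by
        apply csSup_le hEne
        rintro x ⟨z, hz, rfl⟩
        exact hζmax (subset_closure ⟨z, hz, rfl⟩)
      have hζS : ‖ζ‖ = S := le_antisymm hζle hζge
      have hζ0 : ζ ≠ 0 := by
        intro h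
        rw [h, norm_zero] at hζS
        exact absurd hζS.symm (ne_of_gt hS0)
      have hlt : ∀ z ∈ unitDisk, ‖f z‖ < ‖ζ‖ := by
        intro z hz; rw [hζS]; exact hstrict z hz
      have hune : ∀ z ∈ unitDisk, ζ - f z ≠ 0 := by
        intro z hz h
        have : ζ = f z := by linear_combination h
        rw [this] at hlt
        exact lt_irrefl _ (hlt z hz)
      have hnev : NevClass (fun z => (ζ - f z)⁻¹) := by
        refine nev_inv f ζ (2*S+1) hf hζ0 ?_ ?_ (by linarith)
        · intro z hz
          have he : (ζ - f z)/ζ = 1 - f z / ζ := by field_simp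
          rw [he, Complex.sub_re, Complex.one_re]
          have h1 : (f z / ζ).re ≤ ‖f z / ζ‖ := Complex.re_le_norm _
          have h2 : ‖f z / ζ‖ < 1 := by
            rw [norm_div, div_lt_one (by rw [hζS]; exact hS0)]
            exact hlt z hz
          linarith
        · intro z hz
          have h2 : ‖ζ - f z‖ ≤ ‖ζ‖ + ‖f z‖ := by
            simpa [] using norm_sub_le ζ (f z)
          have := hleS z hz
          rw [hζS] at h2
          linarith
      have hSsΛ : 0 < S - sΛ := by linarith
      have hbound : ∀ lam ∈ Λ, ‖(ζ - f lam)⁻¹‖ ≤ (S - sΛ)⁻¹ := by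
        intro lam hlam
        have hd : S - sΛ ≤ ‖ζ - f lam‖ := by
          have h1 : ‖ζ‖ - ‖f lam‖ ≤ ‖ζ - f lam‖ := by
            simpa [] using norm_sub_norm_le ζ (f lam)
          have := hsΛub lam hlam
          rw [hζS] at h1
          linarith
        rw [norm_inv]
        exact inv_anti₀ hSsΛ hd
      obtain ⟨M, hM⟩ := hdet _ hnev ⟨(S - sΛ)⁻¹, hbound⟩
      have hM0 : 0 ≤ M := le_trans (norm_nonneg _) (hM 0 h01)
      have hζcl := hζK
      rw [Metric.mem_closure_iff] at hζcl
      obtain ⟨w, hw, hwd⟩ := hζcl (M+1)⁻¹ (by positivity)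
      obtain ⟨z, hz, rfl⟩ := hw
      have h1 : ‖ζ - f z‖ < (M+1)⁻¹ := by
        simpa [Complex.dist_eq] using hwd
      have hx0 : 0 < ‖ζ - f z‖ := by
        rw [norm_pos_iff]
        exact hune z hz
      have h2 : ‖(ζ - f z)⁻¹‖ ≤ M := hM z hz
      rw [norm_inv] at h2
      have h3 : ((M+1)⁻¹)⁻¹ < (‖ζ - f z‖)⁻¹ :=
        inv_strictAnti₀ hx0 h1
      rw [inv_inv] at h3
      linarith
    · -- f attains its max modulus: f is constant
      push_neg at hstrict
      obtain ⟨z₁, hz₁d, hz₁⟩ := hstrict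
      have hz₁S : ‖f z₁‖ = S := le_antisymm (hleS z₁ hz₁d) hz₁
      have hmax : IsMaxOn (norm ∘ f) unitDisk z₁ := by
        rw [isMaxOn_iff]
        intro x hx
        simp only [Function.comp_apply]
        rw [hz₁S]
        exact hleS x hx
      have hopen : IsOpen unitDisk := Metric.isOpen_ball
      have hpre : IsPreconnected unitDisk := (convex_ball (0:ℂ) 1).isPreconnected
      have hconst := Complex.eqOn_of_isPreconnected_of_isMaxOn_norm hpre hopen hf hz₁d hmax
      have h1 : f z₀ = f z₁ := hconst hz₀
      have h2 : f lam0 = f z₁ := hconst (hΛ hlam0)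
      have : ‖f z₀‖ ≤ sΛ := by
        rw [h1, ← h2]
        exact hsΛub lam0 hlam0
      linarith
  -- conclude the EReal equality
  apply le_antisymm
  · exact iSup₂_le fun z hz => le_iSup₂_of_le z (hΛ hz) le_rfl
  · refine iSup₂_le fun z hz => ?_
    have h1 : ((‖f z‖ : ℝ) : EReal) ≤ ((sΛ : ℝ) : EReal) :=
      EReal.coe_le_coe_iff.2 (key z hz)
    refine h1.trans ?_
    set T := ⨆ z ∈ Λ, ((‖f z‖ : ℝ) : EReal) with hTdef
    have hub : ∀ lam ∈ Λ, ((‖f lam‖ : ℝ) : EReal) ≤ T := fun lam hlam =>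
      le_iSup₂_of_le lam hlam le_rfl
    have hTne : T ≠ ⊥ := by
      intro h
      have := hub lam0 hlam0
      rw [h, le_bot_iff] at this
      exact EReal.coe_ne_bot _ this
    rcases eq_or_ne T ⊤ with h | h
    · rw [h]; exact le_top
    · lift T to ℝ using ⟨h, hTne⟩ with t ht
      rw [EReal.coe_le_coe_iff]
      refine csSup_le ⟨‖f lam0‖, ⟨lam0, hlam0, rfl⟩⟩ ?_
      rintro x ⟨lam, hlam, rfl⟩
      exact EReal.coe_le_coe_iff.1 (hub lam hlam)
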